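/- arXiv:2605.15017 — 2 statements merged into one kernel-verified Lean document; each statement's English description precedes it below -/
import Mathlib

section
/- Suppose a graph G admits unit eigenvectors φ_1, ..., φ_r in the eigenspace of λ_2 of its Laplacian, and coefficients a_i ≥ 0 with ∑ a_i = 1, such that for every perturbation y : E → ℝ with ∑_{uv∈E} y_{uv} = 0, one has ∑_{i=1}^r a_i ⟨y, ℓ(φ_i)⟩ = 0, where ℓ(φ)_{uv} = (φ(u)-φ(v))². Then for every nonnegative edge weighting w with ∑_{uv} w_{uv} = |E|, λ_2(w) ≤ λ_2(𝟙), i.e., G is lower conformally rigid. -/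
open Finset Matrix

variable {V : Type*} [Fintype V] [DecidableEq V]

/-- The edge-energy of `φ` on an edge, `(φ(u) - φ(v))²`. -/
noncomputable def ell (φ : V → ℝ) : Sym2 V → ℝ :=
  Sym2.lift ⟨fun u v => (φ u - φ v) ^ 2, fun u v => by ring⟩

/-- The weighted Laplacian `L(w) = D(w) - A(w)` of edge weights `w`. -/
noncomputable def wLap (G : SimpleGraph V) [DecidableRel G.Adj] (w : Sym2 V → ℝ) :
    Matrix V V ℝ :=
  Matrix.diagonal (fun u => ∑ x ∈ G.neighborFinset u, w s(u, x)) -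
    Matrix.of (fun u v => if G.Adj u v then w s(u, v) else 0)

/-- The second-smallest eigenvalue of the weighted Laplacian. -/
noncomputable def lam2 (G : SimpleGraph V) [DecidableRel G.Adj] (w : Sym2 V → ℝ) : ℝ :=
  sInf {r | ∃ φ : V → ℝ, (∑ v, φ v) = 0 ∧ (∑ v, φ v ^ 2) = 1 ∧
    r = φ ⬝ᵥ (wLap G w *ᵥ φ)}

set_option linter.unusedSectionVars false
set_option linter.unusedVariables false

lemma sum_pairs (G : SimpleGraph V) [DecidableRel G.Adj] (f : Sym2 V → ℝ) :
    ∑ u, ∑ v ∈ G.neighborFinset u, f s(u, v) = 2 * ∑ e ∈ G.edgeFinset, f e := by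
  have h1 : ∑ d : G.Dart, f d.edge = ∑ u, ∑ v ∈ G.neighborFinset u, f s(u, v) := by
    let eqv : (Σ v, G.neighborSet v) ≃ G.Dart :=
      { toFun := fun s => ⟨(s.fst, s.snd), s.snd.property⟩
        invFun := fun d => ⟨d.fst, d.snd, d.adj⟩
        left_inv := fun s => by ext <;> simp
        right_inv := fun d => by ext <;> simp }
    rw [← Equiv.sum_comp eqv (fun d => f d.edge), ← Finset.univ_sigma_univ, Finset.sum_sigma]
    refine Finset.sum_congr rfl fun u _ => ?_
    rw [SimpleGraph.neighborFinset_def]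
    exact Finset.sum_set_coe (s := G.neighborSet u) (f := fun v => f s(u, v))
  have h2 : ∑ d : G.Dart, f d.edge = ∑ e ∈ G.edgeFinset, 2 * f e := by
    rw [← Finset.sum_fiberwise_of_maps_to (g := SimpleGraph.Dart.edge)
      (fun d _ => SimpleGraph.mem_edgeFinset.mpr d.edge_mem) (f := fun d => f d.edge)]
    refine Finset.sum_congr rfl fun e he => ?_
    have hcard : #(Finset.univ.filter (fun d : G.Dart => d.edge = e)) = 2 :=
      G.dart_edge_fiber_card e (SimpleGraph.mem_edgeFinset.mp he)
    calc ∑ d ∈ Finset.univ.filter (fun d : G.Dart => d.edge = e), f d.edge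
        = ∑ _d ∈ Finset.univ.filter (fun d : G.Dart => d.edge = e), f e :=
          Finset.sum_congr rfl (fun d hd => by rw [(Finset.mem_filter.mp hd).2])
      _ = 2 * f e := by rw [Finset.sum_const, hcard, nsmul_eq_mul]; norm_num
  rw [← h1, h2, Finset.mul_sum]

lemma sum_pairs_swap (G : SimpleGraph V) [DecidableRel G.Adj] (F : V → V → ℝ) :
    ∑ u, ∑ v ∈ G.neighborFinset u, F u v = ∑ u, ∑ v ∈ G.neighborFinset u, F v u := by
  have h : ∀ F' : V → V → ℝ, ∑ u, ∑ v ∈ G.neighborFinset u, F' u v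
      = ∑ u, ∑ v, if G.Adj u v then F' u v else 0 := by
    intro F'
    refine Finset.sum_congr rfl fun u _ => ?_
    rw [SimpleGraph.neighborFinset_eq_filter, Finset.sum_filter]
  rw [h, h, Finset.sum_comm]
  refine Finset.sum_congr rfl fun u _ => Finset.sum_congr rfl fun v _ => ?_
  by_cases hadj : G.Adj u v
  · rw [if_pos hadj, if_pos hadj.symm]
  · rw [if_neg hadj, if_neg (fun h' => hadj h'.symm)]

lemma wLap_row (G : SimpleGraph V) [DecidableRel G.Adj] (w : Sym2 V → ℝ) (ψ : V → ℝ)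
    (u : V) : (wLap G w *ᵥ ψ) u
      = ∑ v ∈ G.neighborFinset u, (w s(u, v) * ψ u - w s(u, v) * ψ v) := by
  rw [wLap, Matrix.sub_mulVec]
  simp only [Pi.sub_apply, Matrix.mulVec_diagonal]
  rw [Finset.sum_sub_distrib, Finset.sum_mul]
  congr 1
  show ∑ v, (if G.Adj u v then w s(u, v) else 0) * ψ v = _
  rw [SimpleGraph.neighborFinset_eq_filter, Finset.sum_filter]
  refine Finset.sum_congr rfl fun v _ => ?_
  by_cases hadj : G.Adj u v
  · rw [if_pos hadj, if_pos hadj]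
  · rw [if_neg hadj, if_neg hadj]; ring

lemma quad_form (G : SimpleGraph V) [DecidableRel G.Adj] (w : Sym2 V → ℝ) (ψ : V → ℝ) :
    ψ ⬝ᵥ (wLap G w *ᵥ ψ) = ∑ e ∈ G.edgeFinset, w e * ell ψ e := by
  have expand : ψ ⬝ᵥ (wLap G w *ᵥ ψ)
      = ∑ u, ∑ v ∈ G.neighborFinset u, w s(u, v) * (ψ u ^ 2 - ψ u * ψ v) := by
    rw [dotProduct]
    refine Finset.sum_congr rfl fun u _ => ?_
    rw [wLap_row, Finset.mul_sum]
    refine Finset.sum_congr rfl fun v _ => by ring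
  have sym : ∀ u v : V, w s(v, u) = w s(u, v) := fun u v => by rw [Sym2.eq_swap]
  have h2 : 2 * (ψ ⬝ᵥ (wLap G w *ᵥ ψ)) = 2 * ∑ e ∈ G.edgeFinset, w e * ell ψ e := by
    rw [← sum_pairs G (fun e => w e * ell ψ e), expand, two_mul]
    nth_rewrite 2 [sum_pairs_swap]
    rw [← Finset.sum_add_distrib]
    refine Finset.sum_congr rfl fun u _ => ?_
    rw [← Finset.sum_add_distrib]
    refine Finset.sum_congr rfl fun v _ => ?_
    rw [sym u v]
    show _ = w s(u, v) * (ψ u - ψ v) ^ 2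
    ring
  linarith

lemma sum_mulVec (G : SimpleGraph V) [DecidableRel G.Adj] (w : Sym2 V → ℝ) (ψ : V → ℝ) :
    ∑ u, (wLap G w *ᵥ ψ) u = 0 := by
  have sym : ∀ u v : V, w s(v, u) = w s(u, v) := fun u v => by rw [Sym2.eq_swap]
  calc ∑ u, (wLap G w *ᵥ ψ) u
      = ∑ u, ∑ v ∈ G.neighborFinset u, (w s(u, v) * ψ u - w s(u, v) * ψ v) :=
        Finset.sum_congr rfl fun u _ => wLap_row G w ψ u
    _ = ∑ u, (∑ v ∈ G.neighborFinset u, w s(u, v) * ψ u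
          - ∑ v ∈ G.neighborFinset u, w s(u, v) * ψ v) :=
        Finset.sum_congr rfl fun u _ => Finset.sum_sub_distrib _ _
    _ = 0 := by
        rw [Finset.sum_sub_distrib, sub_eq_zero]
        nth_rewrite 2 [sum_pairs_swap]
        refine Finset.sum_congr rfl fun u _ => Finset.sum_congr rfl fun v _ => ?_
        rw [sym u v]

lemma ell_nonneg' (φ : V → ℝ) (e : Sym2 V) : 0 ≤ ell φ e := by
  induction e using Sym2.ind with
  | _ u v => exact sq_nonneg _


/-- If `G` admits unit eigenvectors `φ_1, ..., φ_r` for `λ_2` and convex coefficients `a_i`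
such that for every perturbation `y` summing to zero, `∑ a_i ⟨y, ℓ(φ_i)⟩ = 0`, then `G` is
lower conformally rigid: `λ_2(w) ≤ λ_2(𝟙)` for all normalized nonnegative `w`. -/
theorem equilibrium_implies_lower_conformally_rigid
    (G : SimpleGraph V) [DecidableRel G.Adj] (hG : G.Connected)
    (r : ℕ) (φ : Fin r → V → ℝ) (a : Fin r → ℝ)
    (ha : ∀ i, 0 ≤ a i) (hasum : ∑ i, a i = 1)
    (hunit : ∀ i, ∑ v, φ i v ^ 2 = 1)
    (heig : ∀ i, wLap G (fun _ => 1) *ᵥ φ i = lam2 G (fun _ => 1) • φ i)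
    (hequil : ∀ y : Sym2 V → ℝ, ∑ e ∈ G.edgeFinset, y e = 0 →
      ∑ i, a i * ∑ e ∈ G.edgeFinset, y e * ell (φ i) e = 0) :
    ∀ w : Sym2 V → ℝ, (∀ e, 0 ≤ w e) →
      ∑ e ∈ G.edgeFinset, w e = (G.edgeFinset.card : ℝ) →
      lam2 G w ≤ lam2 G (fun _ => 1) := by
  intro w hw hwsum
  have hSlam2 : lam2 G w = sInf {s | ∃ ψ : V → ℝ, (∑ v, ψ v) = 0 ∧ (∑ v, ψ v ^ 2) = 1 ∧
      s = ψ ⬝ᵥ (wLap G w *ᵥ ψ)} := rfl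
  have hS1lam : lam2 G (fun _ => 1) = sInf {s | ∃ ψ : V → ℝ, (∑ v, ψ v) = 0 ∧
      (∑ v, ψ v ^ 2) = 1 ∧ s = ψ ⬝ᵥ (wLap G (fun _ => 1) *ᵥ ψ)} := rfl
  have hbdd : BddBelow {s | ∃ ψ : V → ℝ, (∑ v, ψ v) = 0 ∧ (∑ v, ψ v ^ 2) = 1 ∧
      s = ψ ⬝ᵥ (wLap G w *ᵥ ψ)} := by
    refine ⟨0, ?_⟩
    rintro s ⟨ψ, h0, h1, hr⟩
    rw [hr, quad_form]
    exact Finset.sum_nonneg fun e _ => mul_nonneg (hw e) (ell_nonneg' ψ e)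
  have hle : ∀ ψ : V → ℝ, (∑ v, ψ v) = 0 → (∑ v, ψ v ^ 2) = 1 →
      lam2 G w ≤ ∑ e ∈ G.edgeFinset, w e * ell ψ e := by
    intro ψ h0 h1
    rw [hSlam2]
    exact csInf_le hbdd ⟨ψ, h0, h1, (quad_form G w ψ).symm⟩
  have hQ1 : ∀ i, ∑ e ∈ G.edgeFinset, ell (φ i) e = lam2 G (fun _ => 1) := by
    intro i
    have hq := quad_form G (fun _ => 1) (φ i)
    rw [heig i, dotProduct_smul, smul_eq_mul] at hq
    have hdot : φ i ⬝ᵥ φ i = 1 := by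
      rw [dotProduct]; simpa [sq] using hunit i
    rw [hdot, mul_one] at hq
    simpa using hq.symm
  by_cases hlam : lam2 G (fun _ => 1) = 0
  · -- lam = 0 case
    rw [hlam]
    by_cases hne : ∃ ψ : V → ℝ, (∑ v, ψ v) = 0 ∧ (∑ v, ψ v ^ 2) = 1
    · by_contra hpos
      push_neg at hpos
      have hC : (0 : ℝ) ≤ (G.edgeFinset.card : ℝ) := Nat.cast_nonneg _
      have hδpos : 0 < lam2 G w := hpos
      have hε : 0 < lam2 G w / (2 * ((G.edgeFinset.card : ℝ) + 1)) :=
        div_pos hδpos (by linarith)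
      obtain ⟨ψ0, hψ0, hψ1⟩ := hne
      have hS1ne : {s | ∃ ψ : V → ℝ, (∑ v, ψ v) = 0 ∧ (∑ v, ψ v ^ 2) = 1 ∧
          s = ψ ⬝ᵥ (wLap G (fun _ => 1) *ᵥ ψ)}.Nonempty :=
        ⟨_, ψ0, hψ0, hψ1, rfl⟩
      have hinf : sInf {s | ∃ ψ : V → ℝ, (∑ v, ψ v) = 0 ∧ (∑ v, ψ v ^ 2) = 1 ∧
          s = ψ ⬝ᵥ (wLap G (fun _ => 1) *ᵥ ψ)}
          < lam2 G w / (2 * ((G.edgeFinset.card : ℝ) + 1)) := by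
        rw [← hS1lam, hlam]; exact hε
      obtain ⟨s, hsmem, hslt⟩ := exists_lt_of_csInf_lt hS1ne hinf
      obtain ⟨ψ, h0, h1, hs⟩ := hsmem
      have hsval : s = ∑ e ∈ G.edgeFinset, ell ψ e := by
        rw [hs, quad_form]; simp
      have hs0 : 0 ≤ s := by
        rw [hsval]; exact Finset.sum_nonneg fun e _ => ell_nonneg' ψ e
      have hterm : ∀ e ∈ G.edgeFinset, ell ψ e ≤ s := by
        intro e he
        rw [hsval]
        exact Finset.single_le_sum (fun e _ => ell_nonneg' ψ e) he
      have hQw : ∑ e ∈ G.edgeFinset, w e * ell ψ e ≤ (G.edgeFinset.card : ℝ) * s := by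
        calc ∑ e ∈ G.edgeFinset, w e * ell ψ e
            ≤ ∑ e ∈ G.edgeFinset, w e * s :=
              Finset.sum_le_sum fun e he =>
                mul_le_mul_of_nonneg_left (hterm e he) (hw e)
          _ = (G.edgeFinset.card : ℝ) * s := by rw [← Finset.sum_mul, hwsum]
      have h1' : lam2 G w ≤ (G.edgeFinset.card : ℝ) * s := le_trans (hle ψ h0 h1) hQw
      have hsD : s * (2 * ((G.edgeFinset.card : ℝ) + 1)) < lam2 G w :=
        (lt_div_iff₀ (by linarith)).mp hslt
      nlinarith [mul_nonneg hC hs0]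
    · -- no valid test vector: the defining set is empty
      have hSempty : {s | ∃ ψ : V → ℝ, (∑ v, ψ v) = 0 ∧ (∑ v, ψ v ^ 2) = 1 ∧
          s = ψ ⬝ᵥ (wLap G w *ᵥ ψ)} = ∅ := by
        rw [Set.eq_empty_iff_forall_notMem]
        rintro s ⟨ψ, h0, h1, -⟩
        exact hne ⟨ψ, h0, h1⟩
      rw [hSlam2, hSempty, Real.sInf_empty]
  · -- lam ≠ 0 : eigenvectors are mean-zero
    have hsum0 : ∀ i, ∑ v, φ i v = 0 := by
      intro i
      have hms := sum_mulVec G (fun _ => 1) (φ i)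
      rw [heig i] at hms
      simp only [Pi.smul_apply, smul_eq_mul, ← Finset.mul_sum] at hms
      exact (mul_eq_zero.mp hms).resolve_left hlam
    have hequil' : ∑ i, a i * ((∑ e ∈ G.edgeFinset, w e * ell (φ i) e)
        - lam2 G (fun _ => 1)) = 0 := by
      have hy : ∑ e ∈ G.edgeFinset, (w e - 1) = 0 := by
        rw [Finset.sum_sub_distrib, hwsum]; simp
      have hq := hequil (fun e => w e - 1) hy
      rw [← hq]
      refine Finset.sum_congr rfl fun i _ => ?_
      congr 1
      rw [← hQ1 i, ← Finset.sum_sub_distrib]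
      exact Finset.sum_congr rfl fun e _ => by ring
    have hex : ∃ i, a i ≠ 0 ∧
        (∑ e ∈ G.edgeFinset, w e * ell (φ i) e) ≤ lam2 G (fun _ => 1) := by
      by_contra hcon
      push_neg at hcon
      have hterm : ∀ i ∈ Finset.univ, 0 ≤ a i * ((∑ e ∈ G.edgeFinset, w e * ell (φ i) e)
          - lam2 G (fun _ => 1)) := by
        intro i _
        rcases eq_or_ne (a i) 0 with h | h
        · rw [h]; simp
        · exact le_of_lt (mul_pos (lt_of_le_of_ne (ha i) (Ne.symm h))
            (sub_pos.mpr (hcon i h)))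
      obtain ⟨i0, -, hi0⟩ : ∃ i ∈ Finset.univ, 0 < a i := by
        by_contra hc
        push_neg at hc
        have hnp : ∑ i, a i ≤ 0 := Finset.sum_nonpos fun i hi => hc i hi
        rw [hasum] at hnp; linarith
      have hposs : 0 < ∑ i, a i * ((∑ e ∈ G.edgeFinset, w e * ell (φ i) e)
          - lam2 G (fun _ => 1)) :=
        Finset.sum_pos' hterm ⟨i0, Finset.mem_univ i0,
          mul_pos hi0 (sub_pos.mpr (hcon i0 (ne_of_gt hi0)))⟩
      rw [hequil'] at hposs; exact lt_irrefl 0 hposs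
    obtain ⟨i, -, hQle⟩ := hex
    exact le_trans (hle (φ i) (hsum0 i) (hunit i)) hQle
end

section
/- Let Ψ be a group of automorphisms of a connected graph G and let w : E → ℝ≥0 be edge weights with symmetrization w' = (1/|Ψ|) ∑_{τ∈Ψ} τ·w. Then λ_2(w') ≥ λ_2(w) and λ_n(w') ≤ λ_n(w). -/
open Finset Matrix

variable {V : Type*} [Fintype V] [DecidableEq V]

/-- The largest eigenvalue of the weighted Laplacian. -/
noncomputable def lamN (G : SimpleGraph V) [DecidableRel G.Adj] (w : Sym2 V → ℝ) : ℝ :=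
  sSup {r | ∃ φ : V → ℝ, ∑ v, φ v ^ 2 = 1 ∧ r = φ ⬝ᵥ (wLap G w *ᵥ φ)}

lemma quadForm (G : SimpleGraph V) [DecidableRel G.Adj] (w : Sym2 V → ℝ) (φ : V → ℝ) :
    φ ⬝ᵥ (wLap G w *ᵥ φ) =
      ∑ u, ∑ v, (if G.Adj u v then w s(u, v) else 0) * (φ u * φ u - φ u * φ v) := by
  simp only [wLap, dotProduct, mulVec, Matrix.sub_apply, diagonal_apply, of_apply,
    SimpleGraph.neighborFinset_eq_filter, Finset.sum_filter, dotProduct, mul_sub, sub_mul,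
    Finset.mul_sum, Finset.sum_mul, Finset.sum_sub_distrib]
  congr 1
  · congr 1; ext u
    simp only [mul_ite, ite_mul, mul_zero, zero_mul, Finset.sum_ite_eq, Finset.mem_univ,
      if_true, Finset.mul_sum, Finset.sum_mul]
    congr 1; ext v; ring
  · congr 1; ext u; congr 1; ext v; ring

lemma reindex_sum {Γ : Type*} [Group Γ] (G : SimpleGraph V) [DecidableRel G.Adj]
    (act : Γ →* Equiv.Perm V)
    (hact : ∀ (g : Γ) (u v : V), G.Adj (act g u) (act g v) ↔ G.Adj u v)
    (w : Sym2 V → ℝ) (τ : Γ) (φ : V → ℝ) :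
    ∑ u, ∑ v, (if G.Adj u v then w s(act τ⁻¹ u, act τ⁻¹ v) else 0) * (φ u * φ u - φ u * φ v)
      = ∑ u, ∑ v, (if G.Adj u v then w s(u, v) else 0) *
          (φ (act τ u) * φ (act τ u) - φ (act τ u) * φ (act τ v)) := by
  rw [← Equiv.sum_comp (act τ) _]
  congr 1; ext u
  rw [← Equiv.sum_comp (act τ) _]
  congr 1; ext v
  have h1 : act τ⁻¹ (act τ u) = u := by
    rw [map_inv]; exact Equiv.symm_apply_apply _ _
  have h2 : act τ⁻¹ (act τ v) = v := by
    rw [map_inv]; exact Equiv.symm_apply_apply _ _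
  rw [h1, h2]; simp only [hact]

lemma quad_bound (G : SimpleGraph V) [DecidableRel G.Adj] (w : Sym2 V → ℝ) (φ : V → ℝ)
    (hφ : ∑ v, φ v ^ 2 = 1) :
    |φ ⬝ᵥ (wLap G w *ᵥ φ)| ≤ ∑ u, ∑ v, |wLap G w u v| := by
  have habs : ∀ u, |φ u| ≤ 1 := by
    intro u
    rw [← sq_le_one_iff_abs_le_one, ← hφ]
    exact Finset.single_le_sum (f := fun v => φ v ^ 2) (fun i _ => sq_nonneg _) (mem_univ u)
  calc |φ ⬝ᵥ (wLap G w *ᵥ φ)| ≤ ∑ u, |φ u * ∑ v, wLap G w u v * φ v| :=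
        Finset.abs_sum_le_sum_abs _ _
    _ ≤ ∑ u, ∑ v, |wLap G w u v| := by
        refine Finset.sum_le_sum fun u _ => ?_
        rw [abs_mul]
        calc |φ u| * |∑ v, wLap G w u v * φ v| ≤ 1 * ∑ v, |wLap G w u v * φ v| := by
              refine mul_le_mul (habs u) (Finset.abs_sum_le_sum_abs _ _) (abs_nonneg _) ?_
              exact zero_le_one
          _ ≤ ∑ v, |wLap G w u v| := by
              rw [one_mul]
              refine Finset.sum_le_sum fun v _ => ?_
              rw [abs_mul]
              exact mul_le_of_le_one_right (abs_nonneg _) (habs v)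

/-- Symmetrizing edge weights with respect to a finite group of automorphisms can only
increase `λ_2` and decrease `λ_n`. -/
theorem symmetrization_eigenvalue_monotone {Γ : Type*} [Group Γ] [Fintype Γ]
    (G : SimpleGraph V) [DecidableRel G.Adj] (hG : G.Connected)
    (act : Γ →* Equiv.Perm V)
    (hact : ∀ (g : Γ) (u v : V), G.Adj (act g u) (act g v) ↔ G.Adj u v)
    (w : Sym2 V → ℝ) (hw : ∀ e, 0 ≤ w e) :
    let w' : Sym2 V → ℝ :=
      fun e => (Fintype.card Γ : ℝ)⁻¹ * ∑ τ : Γ, w (Sym2.map (act τ⁻¹) e)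
    lam2 G w ≤ lam2 G w' ∧ lamN G w' ≤ lamN G w := by
  intro w'
  have hw' : w' = fun e => (Fintype.card Γ : ℝ)⁻¹ * ∑ τ : Γ, w (Sym2.map (act τ⁻¹) e) := rfl
  set c : ℝ := (Fintype.card Γ : ℝ)⁻¹ with hc
  have hcard : (0 : ℝ) < (Fintype.card Γ : ℝ) := by
    exact_mod_cast Fintype.card_pos
  have hc0 : 0 ≤ c := by positivity
  -- key identity
  have hkey : ∀ φ : V → ℝ, φ ⬝ᵥ (wLap G w' *ᵥ φ)
      = c * ∑ τ : Γ, (fun v => φ (act τ v)) ⬝ᵥ (wLap G w *ᵥ (fun v => φ (act τ v))) := by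
    intro φ
    rw [quadForm]
    have h1 : ∀ u v : V, (if G.Adj u v then w' s(u, v) else 0)
        = ∑ τ : Γ, c * (if G.Adj u v then w s(act τ⁻¹ u, act τ⁻¹ v) else 0) := by
      intro u v
      by_cases h : G.Adj u v <;> simp [h, hw', Finset.mul_sum, Sym2.map_pair_eq]
    calc ∑ u, ∑ v, (if G.Adj u v then w' s(u, v) else 0) * (φ u * φ u - φ u * φ v)
        = ∑ u, ∑ v, ∑ τ : Γ,
            c * ((if G.Adj u v then w s(act τ⁻¹ u, act τ⁻¹ v) else 0) * (φ u * φ u - φ u * φ v)) := by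
          refine Finset.sum_congr rfl fun u _ => Finset.sum_congr rfl fun v _ => ?_
          rw [h1, Finset.sum_mul]
          exact Finset.sum_congr rfl fun τ _ => by ring
      _ = ∑ τ : Γ, ∑ u, ∑ v,
            c * ((if G.Adj u v then w s(act τ⁻¹ u, act τ⁻¹ v) else 0) * (φ u * φ u - φ u * φ v)) := by
          rw [show (∑ u, ∑ v, ∑ τ : Γ,
              c * ((if G.Adj u v then w s(act τ⁻¹ u, act τ⁻¹ v) else 0) * (φ u * φ u - φ u * φ v)))
            = ∑ u, ∑ τ : Γ, ∑ v,
              c * ((if G.Adj u v then w s(act τ⁻¹ u, act τ⁻¹ v) else 0) * (φ u * φ u - φ u * φ v))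
            from Finset.sum_congr rfl fun u _ => Finset.sum_comm]
          exact Finset.sum_comm
      _ = c * ∑ τ : Γ, (fun v => φ (act τ v)) ⬝ᵥ (wLap G w *ᵥ (fun v => φ (act τ v))) := by
          rw [Finset.mul_sum]
          refine Finset.sum_congr rfl fun τ _ => ?_
          simp only [← Finset.mul_sum]
          congr 1
          rw [quadForm]
          exact reindex_sum G act hact w τ φ
  -- invariance of constraints
  have hsum : ∀ (τ : Γ) (φ : V → ℝ), ∑ v, φ (act τ v) = ∑ v, φ v :=
    fun τ φ => Equiv.sum_comp (act τ) φ
  have hsq : ∀ (τ : Γ) (φ : V → ℝ), ∑ v, φ (act τ v) ^ 2 = ∑ v, φ v ^ 2 :=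
    fun τ φ => Equiv.sum_comp (act τ) (fun v => φ v ^ 2)
  set M : ℝ := ∑ u, ∑ v, |wLap G w u v| with hM
  have hc1 : c * (Fintype.card Γ : ℝ) = 1 := inv_mul_cancel₀ hcard.ne'
  constructor
  · -- lam2
    by_cases hP : ∃ φ : V → ℝ, (∑ v, φ v) = 0 ∧ (∑ v, φ v ^ 2) = 1
    · obtain ⟨φ₀, h00, h01⟩ := hP
      have hbdd : BddBelow {r | ∃ φ : V → ℝ, (∑ v, φ v) = 0 ∧ (∑ v, φ v ^ 2) = 1 ∧
          r = φ ⬝ᵥ (wLap G w *ᵥ φ)} := by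
        refine ⟨-M, fun r hr => ?_⟩
        obtain ⟨φ, _, hφ, rfl⟩ := hr
        linarith [abs_le.mp (quad_bound G w φ hφ)]
      refine le_csInf ⟨_, φ₀, h00, h01, rfl⟩ fun r hr => ?_
      obtain ⟨φ, hφ0, hφ1, rfl⟩ := hr
      rw [hkey]
      have hLB : ∀ τ : Γ, lam2 G w
          ≤ (fun v => φ (act τ v)) ⬝ᵥ (wLap G w *ᵥ (fun v => φ (act τ v))) := fun τ =>
        csInf_le hbdd ⟨fun v => φ (act τ v), by rw [hsum]; exact hφ0,
          by rw [hsq]; exact hφ1, rfl⟩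
      have hsumLB : (Fintype.card Γ : ℝ) * lam2 G w
          ≤ ∑ τ : Γ, (fun v => φ (act τ v)) ⬝ᵥ (wLap G w *ᵥ (fun v => φ (act τ v))) := by
        calc (Fintype.card Γ : ℝ) * lam2 G w = ∑ _τ : Γ, lam2 G w := by
              rw [Finset.sum_const, nsmul_eq_mul, Finset.card_univ]
          _ ≤ _ := Finset.sum_le_sum fun τ _ => hLB τ
      calc lam2 G w = c * ((Fintype.card Γ : ℝ) * lam2 G w) := by
            rw [← mul_assoc, hc1, one_mul]
        _ ≤ _ := mul_le_mul_of_nonneg_left hsumLB hc0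
    · have hempty : ∀ ω : Sym2 V → ℝ, {r | ∃ φ : V → ℝ, (∑ v, φ v) = 0 ∧ (∑ v, φ v ^ 2) = 1 ∧
          r = φ ⬝ᵥ (wLap G ω *ᵥ φ)} = ∅ := by
        intro ω
        rw [Set.eq_empty_iff_forall_notMem]
        rintro r ⟨φ, h0, h1, -⟩
        exact hP ⟨φ, h0, h1⟩
      show sInf _ ≤ sInf _
      rw [hempty, hempty]
  · -- lamN
    obtain ⟨v₀⟩ := hG.nonempty
    have hφ₀ : ∑ v, (fun u => if u = v₀ then (1 : ℝ) else 0) v ^ 2 = 1 := by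
      simp [Finset.sum_ite_eq]
    have hbdd : BddAbove {r | ∃ φ : V → ℝ, (∑ v, φ v ^ 2) = 1 ∧
        r = φ ⬝ᵥ (wLap G w *ᵥ φ)} := by
      refine ⟨M, fun r hr => ?_⟩
      obtain ⟨φ, hφ, rfl⟩ := hr
      linarith [abs_le.mp (quad_bound G w φ hφ)]
    refine csSup_le ⟨_, fun u => if u = v₀ then (1 : ℝ) else 0, hφ₀, rfl⟩ fun r hr => ?_
    obtain ⟨φ, hφ1, rfl⟩ := hr
    rw [hkey]
    have hUB : ∀ τ : Γ, (fun v => φ (act τ v)) ⬝ᵥ (wLap G w *ᵥ (fun v => φ (act τ v)))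
        ≤ lamN G w := fun τ =>
      le_csSup hbdd ⟨fun v => φ (act τ v), by rw [hsq]; exact hφ1, rfl⟩
    calc c * ∑ τ : Γ, (fun v => φ (act τ v)) ⬝ᵥ (wLap G w *ᵥ (fun v => φ (act τ v)))
        ≤ c * ((Fintype.card Γ : ℝ) * lamN G w) := by
          refine mul_le_mul_of_nonneg_left ?_ hc0
          calc ∑ τ : Γ, (fun v => φ (act τ v)) ⬝ᵥ (wLap G w *ᵥ (fun v => φ (act τ v)))
              ≤ ∑ _τ : Γ, lamN G w := Finset.sum_le_sum fun τ _ => hUB τ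
            _ = (Fintype.card Γ : ℝ) * lamN G w := by
                rw [Finset.sum_const, nsmul_eq_mul, Finset.card_univ]
      _ = lamN G w := by rw [← mul_assoc, hc1, one_mul]
end
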